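/- If \(B\) is an odd \(T\)-walk barrier in network \((G, T, cap)\) and \(\mathcal{P} = \{\alpha_1 \cdot W_1, \dots, \alpha_m \cdot W_m\}\) is any fractional packing of odd \(T\)-walks, then \(\sum_i \alpha_i \leq \frac{1}{2} cap(I(B)) + cap(U(B))\). (Weak duality for odd \(T\)-walk packing.) -/

import Mathlib

/-!
Give weight `1/2` to the edges of `I(B)` and weight `1` to those of `U(B)`. By weak LP duality
it suffices that every odd `T`-walk `W` has weight at least `1`. Both ends of `W` lie in `V(B)`,
so `W` crosses `δ(V(B))` an even number of times: either at least twice, or never, in which case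
`W` stays inside `V(B)`; if it also avoids `U(B)`, all its edges are edges of `B` and `W` is an
odd `T`-walk of `B`, which a barrier excludes.
-/

open scoped Classical

section

open Finset SimpleGraph

variable {V : Type*}

namespace Sym2

/-- `e ∈ δ(S)`; thus `I(B)` is `{e ∈ E(G) | Crosses B.verts e}`. -/
def Crosses (S : Set V) (e : Sym2 V) : Prop := ∃ u v, e = s(u, v) ∧ u ∈ S ∧ v ∉ S

theorem crosses_mk_iff {S : Set V} {u v : V} : Crosses S s(u, v) ↔ ¬(u ∈ S ↔ v ∈ S) := by
  constructor
  · rintro ⟨a, b, he, ha, hb⟩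
    rcases Sym2.eq_iff.mp he with ⟨rfl, rfl⟩ | ⟨rfl, rfl⟩ <;> tauto
  · intro h
    by_cases hu : u ∈ S
    · exact ⟨u, v, rfl, hu, by tauto⟩
    · exact ⟨v, u, Sym2.eq_swap, by tauto, hu⟩

end Sym2

namespace SimpleGraph

variable {G : SimpleGraph V}

/-- `U(B)` is `{e ∈ E(G) | B.IsSpannedNonEdge e}`. -/
def Subgraph.IsSpannedNonEdge (B : G.Subgraph) (e : Sym2 V) : Prop :=
  e ∉ B.edgeSet ∧ ∀ u v, e = s(u, v) → u ∈ B.verts ∧ v ∈ B.verts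

namespace Walk

theorem even_countP_crosses_iff (S : Set V) {a b : V} (w : G.Walk a b) :
    Even (w.edges.countP (Sym2.Crosses S ·)) ↔ (a ∈ S ↔ b ∈ S) := by
  induction w with
  | nil => simp
  | @cons a c b _ p ih =>
    rw [edges_cons, List.countP_cons, Nat.even_add, ih]
    have hac : Sym2.Crosses S s(a, c) ↔ ¬(a ∈ S ↔ c ∈ S) := Sym2.crosses_mk_iff
    by_cases h : Sym2.Crosses S s(a, c) <;> simp [h] <;> tauto

theorem support_subset_of_forall_not_crosses {S : Set V} {a b : V} (w : G.Walk a b) (ha : a ∈ S)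
    (hw : ∀ e ∈ w.edges, ¬Sym2.Crosses S e) : ∀ x ∈ w.support, x ∈ S := by
  intro x hx
  have hprefix : ∀ e ∈ (w.takeUntil x hx).edges, ¬Sym2.Crosses S e :=
    fun e he => hw e (w.edges_takeUntil_subset_edges hx he)
  have := (w.takeUntil x hx).even_countP_crosses_iff S
  rw [List.countP_eq_zero.mpr (by simpa using hprefix)] at this
  exact (this.mp Even.zero).mp ha

end Walk

namespace Subgraph

theorem exists_walk_coe_length_eq (B : G.Subgraph) {a b : V} (w : G.Walk a b) (hw : ¬w.Nil)
    (hB : w.edgeSet ⊆ B.edgeSet) :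
    ∃ (ha : a ∈ B.verts) (hb : b ∈ B.verts) (w' : B.coe.Walk ⟨a, ha⟩ ⟨b, hb⟩),
      w'.length = w.length := by
  have hle := (Walk.toSubgraph_le_iff hw).mpr hB
  exact ⟨hle.1 w.start_mem_verts_toSubgraph, hle.1 w.end_mem_verts_toSubgraph,
    w.mapToSubgraph.map (inclusion hle), (Walk.length_map _ _).trans <|
      (Walk.length_map w.toSubgraph.hom _).symm.trans (congrArg _ w.map_mapToSubgraph_hom)⟩

theorem mem_edgeSet_of_not_crosses_of_not_isSpannedNonEdge (B : G.Subgraph) {a b : V}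
    (w : G.Walk a b) (ha : a ∈ B.verts)
    (hw : ∀ e ∈ w.edges, ¬Sym2.Crosses B.verts e ∧ ¬B.IsSpannedNonEdge e) :
    w.edgeSet ⊆ B.edgeSet := by
  have hsupp := w.support_subset_of_forall_not_crosses ha fun e he => (hw e he).1
  intro e he
  induction e using Sym2.ind with
  | h u v =>
    by_contra hnot
    refine (hw _ he).2 ⟨hnot, fun u' v' huv => ?_⟩
    have hu := hsupp u (w.fst_mem_support_of_mem_edges he)
    have hv := hsupp v (w.snd_mem_support_of_mem_edges he)
    rcases Sym2.eq_iff.mp huv with ⟨rfl, rfl⟩ | ⟨rfl, rfl⟩ <;> exact ⟨‹_›, ‹_›⟩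

theorem two_le_countP_crosses_add_two_mul_countP_isSpannedNonEdge (B : G.Subgraph) {a b : V}
    (ha : a ∈ B.verts) (hb : b ∈ B.verts)
    (hbar : ∀ w' : B.coe.Walk ⟨a, ha⟩ ⟨b, hb⟩, ¬Odd w'.length) (w : G.Walk a b)
    (hw : Odd w.length) :
    2 ≤ w.edges.countP (Sym2.Crosses B.verts ·)
      + 2 * w.edges.countP (B.IsSpannedNonEdge ·) := by
  by_contra! hlt
  have hcross : w.edges.countP (Sym2.Crosses B.verts ·) = 0 := by
    obtain ⟨k, hk⟩ := (w.even_countP_crosses_iff B.verts).mpr (iff_of_true ha hb)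
    omega
  have hspanned : w.edges.countP (B.IsSpannedNonEdge ·) = 0 := by omega
  have hedges := B.mem_edgeSet_of_not_crosses_of_not_isSpannedNonEdge w ha fun e he =>
    ⟨by simpa using List.countP_eq_zero.mp hcross e he,
      by simpa using List.countP_eq_zero.mp hspanned e he⟩
  have hnil : ¬w.Nil := fun h => by simp [Walk.length_eq_zero_iff.mpr h] at hw
  obtain ⟨_, _, w', hw'⟩ := B.exists_walk_coe_length_eq w hnil hedges
  exact hbar w' (hw' ▸ hw)

end Subgraph
end SimpleGraph

theorem Finset.sum_filter_count_eq_countP_of_subset {α : Type*} [DecidableEq α] (p : α → Prop)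
    [DecidablePred p] {l : List α} {s : Finset α} (hl : ∀ x ∈ l, x ∈ s) :
    ∑ x ∈ s with p x, l.count x = l.countP p := by
  rw [← sum_filter_count_eq_countP]
  refine (sum_subset (filter_subset_filter p fun x hx => hl x (List.mem_toFinset.mp hx))
    fun x _ hx => List.count_eq_zero.mpr ?_).symm
  simp_all

theorem Finset.sum_le_sum_mul_of_cover_of_pack {ι κ R : Type*} [CommSemiring R] [PartialOrder R]
    [IsOrderedRing R] {s : Finset ι} {t : Finset κ} {α : ι → R} {y cap : κ → R}
    {n : ι → κ → R} (hα : ∀ i ∈ s, 0 ≤ α i) (hy : ∀ e ∈ t, 0 ≤ y e)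
    (hcover : ∀ i ∈ s, 1 ≤ ∑ e ∈ t, y e * n i e)
    (hpack : ∀ e ∈ t, ∑ i ∈ s, α i * n i e ≤ cap e) :
    ∑ i ∈ s, α i ≤ ∑ e ∈ t, y e * cap e :=
  calc ∑ i ∈ s, α i ≤ ∑ i ∈ s, α i * ∑ e ∈ t, y e * n i e :=
        sum_le_sum fun i hi => le_mul_of_one_le_right (hα i hi) (hcover i hi)
    _ = ∑ e ∈ t, y e * ∑ i ∈ s, α i * n i e := by
        simp only [mul_sum]
        rw [sum_comm]
        simp only [mul_left_comm]
    _ ≤ ∑ e ∈ t, y e * cap e :=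
        sum_le_sum fun e he => mul_le_mul_of_nonneg_left (hpack e he) (hy e he)

namespace SimpleGraph.Subgraph

variable {G : SimpleGraph V}

noncomputable def barrierWeight (B : G.Subgraph) (e : Sym2 V) : ℝ :=
  (if Sym2.Crosses B.verts e then 1 / 2 else 0) + (if B.IsSpannedNonEdge e then 1 else 0)

theorem barrierWeight_nonneg (B : G.Subgraph) (e : Sym2 V) : 0 ≤ B.barrierWeight e := by
  unfold barrierWeight; positivity

variable [Fintype V] [DecidableEq V]

theorem sum_barrierWeight_mul_count (B : G.Subgraph) {a b : V} (w : G.Walk a b) :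
    ∑ e ∈ G.edgeFinset, B.barrierWeight e * w.edges.count e =
      1 / 2 * (w.edges.countP (Sym2.Crosses B.verts ·) : ℝ)
        + w.edges.countP (B.IsSpannedNonEdge ·) := by
  have hsub : ∀ e ∈ w.edges, e ∈ G.edgeFinset := fun e he =>
    mem_edgeFinset.mpr (w.edges_subset_edgeSet he)
  simp only [barrierWeight, add_mul, ite_mul, one_mul, zero_mul, sum_add_distrib, ← sum_filter,
    ← mul_sum]
  rw [← Nat.cast_sum, ← Nat.cast_sum, sum_filter_count_eq_countP_of_subset _ hsub,
    sum_filter_count_eq_countP_of_subset _ hsub]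

theorem one_le_sum_barrierWeight_mul_count (B : G.Subgraph) {a b : V}
    (ha : a ∈ B.verts) (hb : b ∈ B.verts)
    (hbar : ∀ w' : B.coe.Walk ⟨a, ha⟩ ⟨b, hb⟩, ¬Odd w'.length) (w : G.Walk a b)
    (hw : Odd w.length) :
    1 ≤ ∑ e ∈ G.edgeFinset, B.barrierWeight e * w.edges.count e := by
  have h := B.two_le_countP_crosses_add_two_mul_countP_isSpannedNonEdge ha hb hbar w hw
  rw [sum_barrierWeight_mul_count]
  have h' : (2 : ℝ) ≤ w.edges.countP (Sym2.Crosses B.verts ·)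
      + 2 * w.edges.countP (B.IsSpannedNonEdge ·) := by exact_mod_cast h
  linarith

end SimpleGraph.Subgraph

end

theorem stmt3 {V : Type*} [Fintype V] [DecidableEq V]
    (G : SimpleGraph V) (T : Set V) (cap : Sym2 V → ℝ)
    -- `B` is an odd `T`-walk barrier:
    (B : G.Subgraph) (hTB : T ⊆ B.verts)
    (hbar : ∀ (x y : B.verts), (x : V) ∈ T → (y : V) ∈ T → (x : V) ≠ (y : V) →
      ∀ w : B.coe.Walk x y, ¬ Odd w.length)
    -- a fractional packing of odd `T`-walks:
    (m : ℕ) (α : Fin m → ℝ) (hα : ∀ i, 0 ≤ α i)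
    (x y : Fin m → V) (W : ∀ i, G.Walk (x i) (y i))
    (hterm : ∀ i, x i ∈ T ∧ y i ∈ T ∧ x i ≠ y i)
    (hodd : ∀ i, Odd (W i).length)
    (hpack : ∀ e ∈ G.edgeSet, ∑ i, α i * ((W i).edges.count e : ℝ) ≤ cap e) :
    ∑ i, α i ≤
      (1 / 2) * (∑ e ∈ G.edgeFinset,
          if ∃ u v, e = s(u, v) ∧ u ∈ B.verts ∧ v ∉ B.verts then cap e else 0)
      + (∑ e ∈ G.edgeFinset,
          if e ∉ B.edgeSet ∧ ∀ u v, e = s(u, v) → u ∈ B.verts ∧ v ∈ B.verts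
          then cap e else 0) := by
  have hcover : ∀ i ∈ Finset.univ,
      1 ≤ ∑ e ∈ G.edgeFinset, B.barrierWeight e * (W i).edges.count e := fun i _ =>
    B.one_le_sum_barrierWeight_mul_count (hTB (hterm i).1) (hTB (hterm i).2.1)
      (hbar _ _ (hterm i).1 (hterm i).2.1 (hterm i).2.2) (W i) (hodd i)
  calc ∑ i, α i ≤ ∑ e ∈ G.edgeFinset, B.barrierWeight e * cap e :=
        Finset.sum_le_sum_mul_of_cover_of_pack (fun i _ => hα i)
          (fun e _ => B.barrierWeight_nonneg e) hcover
          fun e he => hpack e (SimpleGraph.mem_edgeFinset.mp he)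
    _ = _ := by
        rw [Finset.mul_sum, ← Finset.sum_add_distrib]
        refine Finset.sum_congr rfl fun e _ => ?_
        unfold SimpleGraph.Subgraph.barrierWeight Sym2.Crosses
          SimpleGraph.Subgraph.IsSpannedNonEdge
        split_ifs <;> ring
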